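/- arXiv:2009.06778 — 2 statements merged into one kernel-verified Lean document; each statement's English description precedes it below -/
import Mathlib

section
/- Let Q and T be trajectories in V and s a time interval with |s| > 0 and s ⊆ I(Q). If Sim(Q,T,s) = 1 then the time-restrictions Q[s] and T[s] coincide (i.e., at every time in s both trajectories are defined and are at the same vertex). -/
open MeasureTheory

/-- A trajectory in `V`: a nonempty list of (vertex, interval start, interval end) triples,
with integer endpoints `a < b`, consecutive intervals sharing endpoints, and consecutive
vertices distinct. -/
structure Traj (V : Type*) where
  steps : List (V × ℤ × ℤ)
  nonempty : steps ≠ []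
  valid : ∀ p ∈ steps, p.2.1 < p.2.2
  chain : steps.Chain' (fun p q => p.2.2 = q.2.1 ∧ p.1 ≠ q.1)

/-- Length (Lebesgue measure) of a set of times. -/
noncomputable def ilen (A : Set ℝ) : ℝ := (volume A).toReal

/-- The time interval of a single trajectory step. -/
def stepInt {V : Type*} (p : V × ℤ × ℤ) : Set ℝ := Set.Icc (p.2.1 : ℝ) (p.2.2 : ℝ)

/-- The total interval `I(T)` of a trajectory: from its starting time to its ending time. -/
noncomputable def totalInt {V : Type*} (T : Traj V) : Set ℝ :=
  Set.Icc (((T.steps.head T.nonempty).2.1 : ℝ)) (((T.steps.getLast T.nonempty).2.2 : ℝ))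

/-- The spatio-temporal similarity `Sim(Q,T,s)`. -/
noncomputable def Sim {V : Type*} [MetricSpace V] (Q T : Traj V) (s : Set ℝ) : ℝ :=
  (1 / ilen s) *
    (Q.steps.map (fun q =>
      (T.steps.map (fun p =>
        ilen (s ∩ stepInt p ∩ stepInt q) * Real.exp (-(dist p.1 q.1)))).sum)).sum

/-- The spatio-temporal distance `Dist(Q,T,s) = 1 - Sim(Q,T,s)`. -/
noncomputable def TrajDist {V : Type*} [MetricSpace V] (Q T : Traj V) (s : Set ℝ) : ℝ :=
  1 - Sim Q T s

/-- Trajectory `T` is at vertex `v` at time `x`. -/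
def TrajAt {V : Type*} (T : Traj V) (x : ℝ) (v : V) : Prop :=
  ∃ p ∈ T.steps, x ∈ stepInt p ∧ p.1 = v

/-! Since `e^{-d} ≤ 1` and the steps of a trajectory overlap only at endpoints,
`|s| · Sim(Q,T,s) ≤ Σ_q Σ_p |s ∩ p ∩ q| ≤ Σ_q |s ∩ q| ≤ |s|`. Equality throughout forces, for
every step `q` of `Q`, that each step `p` of `T` meeting `s ∩ q` in positive measure carries the
vertex of `q`, and that the steps of `T` cover `s ∩ q` up to a null set.
All endpoints are integers, so a unit interval `[n, n+1] ⊆ s` around a given time lies in a step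
`q` of `Q`, and any step of `T` meeting it in positive measure contains it; such a step exists
because `T` covers `[n, n+1]` almost everywhere. -/

open Set Function
open scoped ENNReal

namespace MeasureTheory

variable {α ι : Type*} [MeasurableSpace α] {μ : Measure α} {f : ι → Set α}

theorem sum_map_measureReal_inter_le (hf : ∀ i, MeasurableSet (f i)) :
    ∀ {L : List ι}, L.Pairwise (AEDisjoint μ on f) → ∀ {E : Set α}, μ E ≠ ∞ →
      (L.map fun i => μ.real (E ∩ f i)).sum ≤ μ.real E
  | [], _, E, _ => by simp
  | i :: L, hL, E, hE => by
    obtain ⟨hi, hL⟩ := List.pairwise_cons.mp hL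
    have hrest : (L.map fun j => μ.real (E ∩ f j)) = L.map fun j => μ.real ((E \ f i) ∩ f j) :=
      List.map_congr_left fun j hj => measureReal_congr <| by
        rw [← inter_sdiff_right_comm]
        have hsub : E ∩ f j ∩ f i ⊆ f i ∩ f j := fun _ hy => ⟨hy.2, hy.1.2⟩
        exact (sdiff_ae_eq_self.mpr (measure_mono_null hsub (hi j hj))).symm
    have hsplit := measureReal_inter_add_sdiff (μ := μ) (s := E) (hf i) hE
    have ih := sum_map_measureReal_inter_le hf hL (E := E \ f i)
      (measure_ne_top_of_subset sdiff_subset hE)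
    simp only [List.map_cons, List.sum_cons, hrest]
    linarith

theorem measureReal_le_sum_map_inter_of_subset (hf : ∀ i, MeasurableSet (f i)) {L : List ι}
    (hL : L.Pairwise (AEDisjoint μ on f)) {A J : Set α} (hA : μ A ≠ ∞) (hJ : MeasurableSet J)
    (hJA : J ⊆ A) (hcover : μ.real A ≤ (L.map fun i => μ.real (A ∩ f i)).sum) :
    μ.real J ≤ (L.map fun i => μ.real (J ∩ f i)).sum := by
  have hsplit : ∀ i, μ.real (A ∩ f i) = μ.real (J ∩ f i) + μ.real ((A \ J) ∩ f i) := fun i => by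
    rw [← measureReal_inter_add_sdiff (s := A ∩ f i) hJ
      (measure_ne_top_of_subset inter_subset_left hA), inter_right_comm, inter_eq_right.mpr hJA,
      inter_sdiff_right_comm]
  have hAJ := measureReal_inter_add_sdiff (μ := μ) (s := A) hJ hA
  rw [inter_eq_right.mpr hJA] at hAJ
  have hrest := sum_map_measureReal_inter_le hf hL (measure_ne_top_of_subset sdiff_subset hA)
    (E := A \ J)
  simp only [hsplit, List.sum_map_add] at hcover
  linarith

end MeasureTheory

theorem List.eq_of_sum_map_eq_of_le {ι : Type*} {L : List ι} {f g : ι → ℝ}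
    (hle : ∀ i ∈ L, f i ≤ g i) (heq : (L.map f).sum = (L.map g).sum) : ∀ i ∈ L, f i = g i :=
  fun i hi => (hle i hi).eq_of_not_lt fun hlt => (List.sum_lt_sum f g hle ⟨i, hi, hlt⟩).ne heq

theorem Real.aedisjoint_Icc_of_le {a b c d : ℝ} (h : b ≤ c) :
    AEDisjoint volume (Icc a b) (Icc c d) :=
  measure_mono_null (Icc_inter_Icc.trans_subset (Icc_subset_Icc le_sup_right inf_le_left))
    (by rw [Real.volume_Icc, ENNReal.ofReal_eq_zero, sub_nonpos]; exact h)

theorem exists_int_mem_Icc_add_one {a b : ℤ} (hab : a < b) {x : ℝ} (hx : x ∈ Icc (a : ℝ) b) :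
    ∃ n : ℤ, a ≤ n ∧ n + 1 ≤ b ∧ x ∈ Icc (n : ℝ) (n + 1) := by
  have hax : a ≤ ⌊x⌋ := Int.le_floor.mpr hx.1
  refine ⟨min ⌊x⌋ (b - 1), by omega, by omega, ?_, ?_⟩
  · exact (Int.cast_mono (min_le_left _ _)).trans (Int.floor_le x)
  · rcases min_choice ⌊x⌋ (b - 1) with h | h <;> rw [h] <;> push_cast
    · exact (Int.lt_floor_add_one x).le
    · linarith [hx.2]

theorem Icc_add_one_subset_Icc_of_mem_Ioo {n c d : ℤ} {y : ℝ} (hy : y ∈ Ioo (n : ℝ) (n + 1))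
    (hycd : y ∈ Icc (c : ℝ) d) : Icc (n : ℝ) (n + 1) ⊆ Icc (c : ℝ) d := by
  have hc : c < n + 1 := by exact_mod_cast hycd.1.trans_lt hy.2
  have hd : n < d := by exact_mod_cast hy.1.trans_le hycd.2
  exact Icc_subset_Icc (by exact_mod_cast Int.lt_add_one_iff.mp hc) (by exact_mod_cast hd)

theorem Icc_add_one_subset_Icc_of_measureReal_inter_pos {n c d : ℤ}
    (h : 0 < volume.real (Icc (n : ℝ) (n + 1) ∩ Icc (c : ℝ) d)) :
    Icc (n : ℝ) (n + 1) ⊆ Icc (c : ℝ) d := by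
  rw [← measureReal_congr ((Ioo_ae_eq_Icc (μ := volume) (a := (n : ℝ)) (b := n + 1)).inter
    (Filter.EventuallyEq.refl _ (Icc (c : ℝ) d)))] at h
  obtain ⟨y, hy, hycd⟩ := nonempty_of_measureReal_ne_zero h.ne'
  exact Icc_add_one_subset_Icc_of_mem_Ioo hy hycd

theorem exists_mem_stepInt_of_isChain {V : Type*} :
    ∀ {L : List (V × ℤ × ℤ)}, L.IsChain (fun p q => p.2.2 = q.2.1) → ∀ (hL : L ≠ []) {x : ℝ},
      x ∈ Icc ((L.head hL).2.1 : ℝ) (L.getLast hL).2.2 → ∃ p ∈ L, x ∈ stepInt p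
  | [], _, hL, _, _ => absurd rfl hL
  | [p], _, _, _, hx => ⟨p, List.mem_singleton_self p, hx⟩
  | p :: r :: L, hc, _, x, hx => by
    obtain ⟨hpr, hc⟩ := List.isChain_cons_cons.mp hc
    by_cases hxp : x ≤ p.2.2
    · exact ⟨p, List.mem_cons_self, hx.1, hxp⟩
    · have hxr : x ∈ Icc (((r :: L).head (List.cons_ne_nil r L)).2.1 : ℝ)
          ((r :: L).getLast (List.cons_ne_nil r L)).2.2 :=
        ⟨by rw [List.head_cons, ← hpr]; exact (not_le.mp hxp).le, hx.2⟩
      obtain ⟨q, hq, hxq⟩ := exists_mem_stepInt_of_isChain hc (List.cons_ne_nil r L) hxr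
      exact ⟨q, List.mem_cons_of_mem p hq, hxq⟩

namespace Traj

variable {V : Type*}

theorem isChain_steps (T : Traj V) : T.steps.IsChain (fun p q => p.2.2 = q.2.1) :=
  List.IsChain.imp (fun _ _ h => h.1) T.chain

theorem pairwise_end_le_start (T : Traj V) : T.steps.Pairwise (fun p q => p.2.2 ≤ q.2.1) := by
  let R : V × ℤ × ℤ → V × ℤ × ℤ → Prop := fun p q => p.2.2 ≤ q.2.1 ∧ q.2.1 < q.2.2
  have : Trans R R R := ⟨fun h₁ h₂ => ⟨by omega, h₂.2⟩⟩
  have hR : T.steps.IsChain R :=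
    T.isChain_steps.imp_of_mem_imp fun _ q _ hq h => ⟨h.le, T.valid q hq⟩
  exact hR.pairwise.imp And.left

theorem pairwise_aedisjoint_stepInt (T : Traj V) :
    T.steps.Pairwise (AEDisjoint volume on stepInt) :=
  T.pairwise_end_le_start.imp fun h => Real.aedisjoint_Icc_of_le (by exact_mod_cast h)

theorem sum_measureReal_inter_stepInt_le (T : Traj V) {E : Set ℝ} (hE : volume E ≠ ∞) :
    (T.steps.map fun p => volume.real (E ∩ stepInt p)).sum ≤ volume.real E :=
  sum_map_measureReal_inter_le (fun _ => measurableSet_Icc) T.pairwise_aedisjoint_stepInt hE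

theorem exists_mem_stepInt (T : Traj V) {x : ℝ} (hx : x ∈ totalInt T) :
    ∃ p ∈ T.steps, x ∈ stepInt p :=
  exists_mem_stepInt_of_isChain T.isChain_steps T.nonempty hx

theorem exists_Icc_add_one_subset_stepInt (T : Traj V) {n : ℤ}
    (h : Icc (n : ℝ) (n + 1) ⊆ totalInt T) : ∃ p ∈ T.steps, Icc (n : ℝ) (n + 1) ⊆ stepInt p := by
  have hmid : (n : ℝ) + 1 / 2 ∈ Ioo (n : ℝ) (n + 1) := ⟨by linarith, by linarith⟩
  obtain ⟨p, hp, hmp⟩ := T.exists_mem_stepInt (h (Ioo_subset_Icc_self hmid))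
  exact ⟨p, hp, Icc_add_one_subset_Icc_of_mem_Ioo hmid hmp⟩

end Traj

section Sim

variable {V : Type*} [MetricSpace V] {Q T : Traj V} {s : Set ℝ}

theorem ilen_eq_measureReal (A : Set ℝ) : ilen A = volume.real A := rfl

theorem mul_exp_neg_dist_le_self {x y : V} {w : ℝ} (hw : 0 ≤ w) :
    w * Real.exp (-dist x y) ≤ w :=
  mul_le_of_le_one_right hw (Real.exp_le_one_iff.mpr (neg_nonpos.mpr dist_nonneg))

theorem measureReal_ne_zero_of_sim_eq_one (h : Sim Q T s = 1) : volume.real s ≠ 0 := by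
  intro h0
  rw [Sim, ilen_eq_measureReal s, h0, div_zero, zero_mul] at h
  exact zero_ne_one h

theorem sum_overlap_eq_of_sim_eq_one (h : Sim Q T s = 1) : ∀ q ∈ Q.steps,
    (T.steps.map fun p => volume.real (s ∩ stepInt p ∩ stepInt q) * Real.exp (-dist p.1 q.1)).sum
        = (T.steps.map fun p => volume.real (s ∩ stepInt p ∩ stepInt q)).sum ∧
      (T.steps.map fun p => volume.real (s ∩ stepInt p ∩ stepInt q)).sum
        = volume.real (s ∩ stepInt q) := by
  have hs0 := measureReal_ne_zero_of_sim_eq_one h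
  have hs : volume s ≠ ∞ := (ENNReal.toReal_ne_zero.mp hs0).2
  have hsum : (Q.steps.map fun q => (T.steps.map fun p =>
      volume.real (s ∩ stepInt p ∩ stepInt q) * Real.exp (-dist p.1 q.1)).sum).sum
        = volume.real s := by
    simp only [Sim, ilen_eq_measureReal, one_div_mul_eq_div] at h
    exact (div_eq_one_iff_eq hs0).mp h
  have hexp : ∀ q ∈ Q.steps, (T.steps.map fun p =>
      volume.real (s ∩ stepInt p ∩ stepInt q) * Real.exp (-dist p.1 q.1)).sum
        ≤ (T.steps.map fun p => volume.real (s ∩ stepInt p ∩ stepInt q)).sum :=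
    fun q _ => List.sum_le_sum fun p _ => mul_exp_neg_dist_le_self measureReal_nonneg
  have hT : ∀ q ∈ Q.steps, (T.steps.map fun p => volume.real (s ∩ stepInt p ∩ stepInt q)).sum
      ≤ volume.real (s ∩ stepInt q) := fun q _ => by
    simpa only [inter_right_comm s (stepInt q)] using
      T.sum_measureReal_inter_stepInt_le (E := s ∩ stepInt q)
        (measure_ne_top_of_subset inter_subset_left hs)
  have hQ := Q.sum_measureReal_inter_stepInt_le hs
  have hSM := List.eq_of_sum_map_eq_of_le (fun q hq => (hexp q hq).trans (hT q hq))
    (le_antisymm (List.sum_le_sum fun q hq => (hexp q hq).trans (hT q hq)) (hQ.trans hsum.ge))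
  exact fun q hq => ⟨le_antisymm (hexp q hq) ((hT q hq).trans (hSM q hq).ge),
    le_antisymm (hT q hq) ((hSM q hq).ge.trans (hexp q hq))⟩

theorem fst_eq_of_sim_eq_one (h : Sim Q T s = 1) {p q : V × ℤ × ℤ} (hq : q ∈ Q.steps)
    (hp : p ∈ T.steps) (hpos : 0 < volume.real (s ∩ stepInt p ∩ stepInt q)) : p.1 = q.1 := by
  have hpq := List.eq_of_sum_map_eq_of_le (fun _ _ => mul_exp_neg_dist_le_self measureReal_nonneg)
    (sum_overlap_eq_of_sim_eq_one h q hq).1 p hp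
  rwa [mul_eq_left₀ hpos.ne', Real.exp_eq_one_iff, neg_eq_zero, dist_eq_zero] at hpq

theorem measureReal_le_sum_inter_stepInt_of_sim_eq_one (h : Sim Q T s = 1) {q : V × ℤ × ℤ}
    (hq : q ∈ Q.steps) {J : Set ℝ} (hJ : MeasurableSet J) (hJs : J ⊆ s ∩ stepInt q) :
    volume.real J ≤ (T.steps.map fun p => volume.real (J ∩ stepInt p)).sum := by
  have hs : volume s ≠ ∞ := (ENNReal.toReal_ne_zero.mp (measureReal_ne_zero_of_sim_eq_one h)).2
  refine measureReal_le_sum_map_inter_of_subset (fun _ => measurableSet_Icc)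
    T.pairwise_aedisjoint_stepInt (measure_ne_top_of_subset inter_subset_left hs) hJ hJs ?_
  simp only [inter_right_comm s (stepInt q)]
  exact (sum_overlap_eq_of_sim_eq_one h q hq).2.ge

end Sim

/-- If `s ⊆ I(Q)` and `Sim(Q,T,s) = 1`, then the time-restrictions `Q[s]` and
`T[s]` coincide, i.e., at every time in `s` both trajectories are defined and are at the
same vertex. -/
theorem restrictions_eq_of_sim_eq_one {V : Type*} [MetricSpace V] (Q T : Traj V)
    (a b : ℤ) (hab : a < b) (hs : Set.Icc (a : ℝ) b ⊆ totalInt Q)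
    (hsim : Sim Q T (Set.Icc (a : ℝ) b) = 1) :
    ∀ x ∈ Set.Icc (a : ℝ) b, ∃ v : V, TrajAt Q x v ∧ TrajAt T x v := by
  intro x hx
  obtain ⟨n, han, hnb, hxJ⟩ := exists_int_mem_Icc_add_one hab hx
  set J := Icc (n : ℝ) (n + 1)
  have hJs : J ⊆ Icc (a : ℝ) b := Icc_subset_Icc (by exact_mod_cast han) (by exact_mod_cast hnb)
  obtain ⟨q, hq, hJq⟩ := Q.exists_Icc_add_one_subset_stepInt (hJs.trans hs)
  have hcover := measureReal_le_sum_inter_stepInt_of_sim_eq_one hsim hq measurableSet_Icc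
    (subset_inter hJs hJq)
  obtain ⟨p, hp, hpos⟩ : ∃ p ∈ T.steps, 0 < volume.real (J ∩ stepInt p) := by
    refine List.exists_lt_of_sum_lt (fun _ => 0) _ (lt_of_lt_of_le ?_ hcover)
    simp
  have hJp : J ⊆ stepInt p := Icc_add_one_subset_Icc_of_measureReal_inter_pos hpos
  have hpq : p.1 = q.1 := fst_eq_of_sim_eq_one hsim hq hp <| hpos.trans_le <|
    measureReal_mono (subset_inter (inter_subset_inter_left _ hJs) (inter_subset_left.trans hJq))
      (measure_ne_top_of_subset (inter_subset_left.trans inter_subset_left) measure_Icc_lt_top.ne)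
  exact ⟨q.1, ⟨q, hq, hJq hxJ, rfl⟩, ⟨p, hp, hJp hxJ, hpq⟩⟩
end

section
/- Let Q, T and R be trajectories in V, with Q = ((u_1,s_1),…,(u_k,s_k)), T = ((v_1,t_1),…,(v_ℓ,t_ℓ)), R = ((w_1,r_1),…,(w_m,r_m)), and let s be a time interval with s ⊆ I(Q). Then |s| − |s ∩ I(T)| + Σ_{j,i} |s ∩ s_j ∩ t_i| · (1 + e^{−d(u_j,v_i)}) ≥ Σ_{j,k} |s ∩ s_j ∩ r_k| · e^{−d(u_j,w_k)} + Σ_{k,i} |s ∩ r_k ∩ t_i| · e^{−d(w_k,v_i)}. -/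
open MeasureTheory

/- ### Auxiliary lemmas -/

lemma ilen_nonneg (A : Set ℝ) : 0 ≤ ilen A := ENNReal.toReal_nonneg

lemma ne_top_of_subset_Icc {A : Set ℝ} {x y : ℝ} (h : A ⊆ Set.Icc x y) : volume A ≠ ⊤ :=
  ((measure_mono h).trans_lt measure_Icc_lt_top).ne

lemma ilen_mono {A B : Set ℝ} (h : A ⊆ B) (hB : volume B ≠ ⊤) : ilen A ≤ ilen B :=
  ENNReal.toReal_mono hB (measure_mono h)

lemma ilen_inter_diff (A : Set ℝ) {B : Set ℝ} (hB : MeasurableSet B) (hA : volume A ≠ ⊤) :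
    ilen A = ilen (A ∩ B) + ilen (A \ B) := by
  unfold ilen
  rw [← ENNReal.toReal_add
    (((measure_mono Set.inter_subset_left).trans_lt hA.lt_top).ne)
    (((measure_mono Set.diff_subset).trans_lt hA.lt_top).ne),
    measure_inter_add_diff A hB]

lemma ilen_Icc_split {A : Set ℝ} (hA : MeasurableSet A) {x y z : ℝ} (hxy : x ≤ y) (hyz : y ≤ z) :
    ilen (A ∩ Set.Icc x z) = ilen (A ∩ Set.Icc x y) + ilen (A ∩ Set.Icc y z) := by
  have hmeas : MeasurableSet (A ∩ Set.Icc y z) := hA.inter measurableSet_Icc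
  have hu : (A ∩ Set.Icc x y) ∪ (A ∩ Set.Icc y z) = A ∩ Set.Icc x z := by
    rw [← Set.inter_union_distrib_left, Set.Icc_union_Icc_eq_Icc hxy hyz]
  have hi : (A ∩ Set.Icc x y) ∩ (A ∩ Set.Icc y z) ⊆ {y} := by
    intro t ht
    simp only [Set.mem_inter_iff, Set.mem_Icc] at ht
    have : t = y := le_antisymm ht.1.2.2 ht.2.2.1
    simp [this]
  have h0 : volume ((A ∩ Set.Icc x y) ∩ (A ∩ Set.Icc y z)) = 0 :=
    measure_mono_null hi (by simp)
  have hkey := measure_union_add_inter (μ := volume) (A ∩ Set.Icc x y) hmeas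
  rw [hu, h0, add_zero] at hkey
  unfold ilen
  rw [hkey, ENNReal.toReal_add
    (ne_top_of_subset_Icc (Set.inter_subset_right))
    (ne_top_of_subset_Icc (Set.inter_subset_right))]

lemma sum_swap' {α β : Type*} (l : List α) (m : List β) (f : α → β → ℝ) :
    (l.map fun x => (m.map fun y => f x y).sum).sum
      = (m.map fun y => (l.map fun x => f x y).sum).sum := by
  induction l with
  | nil => simp
  | cons a l ih =>
      simp only [List.map_cons, List.sum_cons, ih, ← List.sum_map_add]

lemma start_le_end {V : Type*} : ∀ (l : List (V × ℤ × ℤ)) (hne : l ≠ []),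
    (∀ p ∈ l, p.2.1 < p.2.2) → l.Chain' (fun p q => p.2.2 = q.2.1 ∧ p.1 ≠ q.1) →
    (l.head hne).2.1 ≤ (l.getLast hne).2.2
  | [], hne, _, _ => absurd rfl hne
  | [p], _, hv, _ => (hv p (by simp)).le
  | p :: q :: l, _, hv, hc => by
      have h1 : p.2.2 = q.2.1 := (List.isChain_cons_cons.mp hc).1.1
      have ih := start_le_end (q :: l) (by simp)
        (fun r hr => hv r (List.mem_cons_of_mem _ hr)) (List.isChain_cons_cons.mp hc).2
      have hgl : (p :: q :: l).getLast (by simp) = (q :: l).getLast (by simp) :=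
        List.getLast_cons (by simp)
      rw [List.head_cons, hgl]
      calc p.2.1 ≤ p.2.2 := (hv p (by simp)).le
        _ = q.2.1 := h1
        _ ≤ _ := ih

lemma sum_ilen {V : Type*} (A : Set ℝ) (hA : MeasurableSet A) :
    ∀ (l : List (V × ℤ × ℤ)) (hne : l ≠ []),
    (∀ p ∈ l, p.2.1 < p.2.2) → l.Chain' (fun p q => p.2.2 = q.2.1 ∧ p.1 ≠ q.1) →
    (l.map fun p => ilen (A ∩ stepInt p)).sum
      = ilen (A ∩ Set.Icc (((l.head hne).2.1 : ℝ)) (((l.getLast hne).2.2 : ℝ)))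
  | [], hne, _, _ => absurd rfl hne
  | [p], _, _, _ => by simp [stepInt]
  | p :: q :: l, _, hv, hc => by
      have h1 : p.2.2 = q.2.1 := (List.isChain_cons_cons.mp hc).1.1
      have hv' : ∀ r ∈ q :: l, r.2.1 < r.2.2 := fun r hr => hv r (List.mem_cons_of_mem _ hr)
      have hc' := (List.isChain_cons_cons.mp hc).2
      have ih := sum_ilen A hA (q :: l) (by simp) hv' hc'
      have hle : ((q :: l).head (by simp)).2.1 ≤ ((q :: l).getLast (by simp)).2.2 :=
        start_le_end (q :: l) (by simp) hv' hc'
      have hgl : (p :: q :: l).getLast (by simp) = (q :: l).getLast (by simp) :=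
        List.getLast_cons (by simp)
      rw [List.map_cons, List.sum_cons, ih, hgl]
      simp only [List.head_cons] at hle ⊢
      have hxy : ((p.2.1 : ℝ)) ≤ ((p.2.2 : ℝ)) := by exact_mod_cast (hv p (by simp)).le
      have hyz : ((p.2.2 : ℝ)) ≤ (((q :: l).getLast (by simp)).2.2 : ℝ) := by
        rw [h1]; exact_mod_cast hle
      have hsplit := ilen_Icc_split hA hxy hyz
      rw [h1] at hsplit
      rw [show stepInt p = Set.Icc ((p.2.1 : ℝ)) ((p.2.2 : ℝ)) from rfl, h1]
      exact hsplit.symm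

lemma traj_sum {V : Type*} (X : Traj V) (A : Set ℝ) (hA : MeasurableSet A) :
    (X.steps.map fun p => ilen (A ∩ stepInt p)).sum = ilen (A ∩ totalInt X) :=
  sum_ilen A hA X.steps X.nonempty X.valid X.chain

lemma traj_sum_sub {V : Type*} (X : Traj V) (A : Set ℝ) (hA : MeasurableSet A)
    (h : A ⊆ totalInt X) :
    (X.steps.map fun p => ilen (A ∩ stepInt p)).sum = ilen A := by
  rw [traj_sum X A hA, Set.inter_eq_left.mpr h]

lemma exp_tri {V : Type*} [MetricSpace V] (u w v : V) :
    Real.exp (-(dist u w)) + Real.exp (-(dist w v)) ≤ 1 + Real.exp (-(dist u v)) := by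
  have h1 : Real.exp (-(dist u w)) * Real.exp (-(dist w v)) ≤ Real.exp (-(dist u v)) := by
    rw [← Real.exp_add]
    exact Real.exp_le_exp.mpr (by linarith [dist_triangle u w v])
  have h2 : Real.exp (-(dist u w)) ≤ 1 := Real.exp_le_one_iff.mpr (neg_nonpos.mpr dist_nonneg)
  have h3 : Real.exp (-(dist w v)) ≤ 1 := Real.exp_le_one_iff.mpr (neg_nonpos.mpr dist_nonneg)
  nlinarith [Real.exp_pos (-(dist u w)), Real.exp_pos (-(dist w v))]

/-- Let `Q`, `T` and `R` be trajectories in `V` and `s` a time interval with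
`s ⊆ I(Q)`. Then
`|s| − |s ∩ I(T)| + Σ_{j,i} |s ∩ s_j ∩ t_i| · (1 + e^{−d(u_j,v_i)})
  ≥ Σ_{j,k} |s ∩ s_j ∩ r_k| · e^{−d(u_j,w_k)} + Σ_{k,i} |s ∩ r_k ∩ t_i| · e^{−d(w_k,v_i)}`. -/
theorem multiset_inequality {V : Type*} [MetricSpace V] (Q T R : Traj V)
    (a b : ℤ) (hab : a < b) (hs : Set.Icc (a : ℝ) b ⊆ totalInt Q) :
    (Q.steps.map (fun q =>
        (R.steps.map (fun r =>
          ilen (Set.Icc (a : ℝ) b ∩ stepInt q ∩ stepInt r) *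
            Real.exp (-(dist q.1 r.1)))).sum)).sum +
      (R.steps.map (fun r =>
        (T.steps.map (fun p =>
          ilen (Set.Icc (a : ℝ) b ∩ stepInt r ∩ stepInt p) *
            Real.exp (-(dist r.1 p.1)))).sum)).sum ≤
    ilen (Set.Icc (a : ℝ) b) - ilen (Set.Icc (a : ℝ) b ∩ totalInt T) +
      (Q.steps.map (fun q =>
        (T.steps.map (fun p =>
          ilen (Set.Icc (a : ℝ) b ∩ stepInt q ∩ stepInt p) *
            (1 + Real.exp (-(dist q.1 p.1))))).sum)).sum := by
  set S : Set ℝ := Set.Icc (a : ℝ) b with hSdef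
  have mS : MeasurableSet S := measurableSet_Icc
  have mT : MeasurableSet (totalInt T) := measurableSet_Icc
  have mStep : ∀ (p : V × ℤ × ℤ), MeasurableSet (stepInt p) := fun p => measurableSet_Icc
  have hfin : ∀ A : Set ℝ, A ⊆ S → volume A ≠ ⊤ := fun A h => ne_top_of_subset_Icc h
  -- rewrite |S| and |S ∩ I(T)| as sums over Q's steps
  have hQ1 : ilen S = (Q.steps.map fun q => ilen (S ∩ stepInt q)).sum :=
    (traj_sum_sub Q S mS hs).symm
  have hQ2 : ilen (S ∩ totalInt T)
      = (Q.steps.map fun q => ilen ((S ∩ totalInt T) ∩ stepInt q)).sum :=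
    (traj_sum_sub Q _ (mS.inter mT) ((Set.inter_subset_left).trans hs)).symm
  -- rewrite the (R,T) double sum as a triple sum grouped by q
  have hG2 : (R.steps.map (fun r =>
        (T.steps.map (fun p =>
          ilen (S ∩ stepInt r ∩ stepInt p) * Real.exp (-(dist r.1 p.1)))).sum)).sum
      = (Q.steps.map (fun q =>
          (R.steps.map (fun r =>
            (T.steps.map (fun p =>
              ilen (S ∩ stepInt q ∩ stepInt r ∩ stepInt p) *
                Real.exp (-(dist r.1 p.1)))).sum)).sum)).sum := by
    have hterm : ∀ (r p : V × ℤ × ℤ),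
        ilen (S ∩ stepInt r ∩ stepInt p) * Real.exp (-(dist r.1 p.1))
          = (Q.steps.map (fun q =>
              ilen (S ∩ stepInt q ∩ stepInt r ∩ stepInt p) *
                Real.exp (-(dist r.1 p.1)))).sum := by
      intro r p
      rw [List.sum_map_mul_right]
      congr 1
      rw [← traj_sum_sub Q (S ∩ stepInt r ∩ stepInt p)
        ((mS.inter (mStep r)).inter (mStep p))
        (((Set.inter_subset_left).trans (Set.inter_subset_left)).trans hs)]
      apply congrArg List.sum
      apply List.map_congr_left
      intro q _
      congr 1
      ext t
      simp only [Set.mem_inter_iff]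
      tauto
    calc (R.steps.map (fun r => (T.steps.map (fun p =>
            ilen (S ∩ stepInt r ∩ stepInt p) * Real.exp (-(dist r.1 p.1)))).sum)).sum
        = (R.steps.map (fun r => (T.steps.map (fun p =>
            (Q.steps.map (fun q =>
              ilen (S ∩ stepInt q ∩ stepInt r ∩ stepInt p) *
                Real.exp (-(dist r.1 p.1)))).sum)).sum)).sum := by
          apply congrArg List.sum
          apply List.map_congr_left
          intro r _
          apply congrArg List.sum
          apply List.map_congr_left
          intro p _
          exact hterm r p
      _ = (R.steps.map (fun r => (Q.steps.map (fun q =>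
            (T.steps.map (fun p =>
              ilen (S ∩ stepInt q ∩ stepInt r ∩ stepInt p) *
                Real.exp (-(dist r.1 p.1)))).sum)).sum)).sum := by
          apply congrArg List.sum
          apply List.map_congr_left
          intro r _
          exact sum_swap' T.steps Q.steps _
      _ = (Q.steps.map (fun q => (R.steps.map (fun r =>
            (T.steps.map (fun p =>
              ilen (S ∩ stepInt q ∩ stepInt r ∩ stepInt p) *
                Real.exp (-(dist r.1 p.1)))).sum)).sum)).sum :=
          sum_swap' R.steps Q.steps _
  -- the per-q inequality
  have key : ∀ q ∈ Q.steps,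
      (R.steps.map (fun r =>
        ilen (S ∩ stepInt q ∩ stepInt r) * Real.exp (-(dist q.1 r.1)))).sum
      + (R.steps.map (fun r =>
          (T.steps.map (fun p =>
            ilen (S ∩ stepInt q ∩ stepInt r ∩ stepInt p) *
              Real.exp (-(dist r.1 p.1)))).sum)).sum
      + ilen ((S ∩ totalInt T) ∩ stepInt q)
      ≤ ilen (S ∩ stepInt q)
      + (T.steps.map (fun p =>
          ilen (S ∩ stepInt q ∩ stepInt p) * (1 + Real.exp (-(dist q.1 p.1))))).sum := by
    intro q _
    set B : Set ℝ := S ∩ stepInt q with hBdef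
    have mB : MeasurableSet B := mS.inter (mStep q)
    have hBS : B ⊆ S := Set.inter_subset_left
    -- split |B|
    have hBsplit : ilen B = ilen (B ∩ totalInt T) + ilen (B \ totalInt T) :=
      ilen_inter_diff B mT (hfin B hBS)
    have hDq : (S ∩ totalInt T) ∩ stepInt q = B ∩ totalInt T := by
      rw [hBdef, Set.inter_right_comm]
    -- expand each term of the first sum
    have hAexp : (R.steps.map (fun r =>
          ilen (B ∩ stepInt r) * Real.exp (-(dist q.1 r.1)))).sum
        = (R.steps.map (fun r =>
            ilen ((B \ totalInt T) ∩ stepInt r) * Real.exp (-(dist q.1 r.1)))).sum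
          + (R.steps.map (fun r =>
              (T.steps.map (fun p =>
                ilen (B ∩ stepInt r ∩ stepInt p))).sum * Real.exp (-(dist q.1 r.1)))).sum := by
      rw [← List.sum_map_add]
      apply congrArg List.sum
      apply List.map_congr_left
      intro r _
      have h1 : ilen (B ∩ stepInt r)
          = ilen ((B ∩ stepInt r) ∩ totalInt T) + ilen ((B ∩ stepInt r) \ totalInt T) :=
        ilen_inter_diff _ mT (hfin _ ((Set.inter_subset_left).trans hBS))
      have h2 : (T.steps.map (fun p => ilen ((B ∩ stepInt r) ∩ stepInt p))).sum
          = ilen ((B ∩ stepInt r) ∩ totalInt T) :=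
        traj_sum T _ (mB.inter (mStep r))
      have h3 : (B ∩ stepInt r) \ totalInt T = (B \ totalInt T) ∩ stepInt r := by
        ext t
        simp only [Set.mem_inter_iff, Set.mem_diff]
        tauto
      rw [h1, h3, h2]
      ring
    -- bound the diff part
    have hbound1 : (R.steps.map (fun r =>
          ilen ((B \ totalInt T) ∩ stepInt r) * Real.exp (-(dist q.1 r.1)))).sum
        ≤ ilen (B \ totalInt T) := by
      have step1 : (R.steps.map (fun r =>
            ilen ((B \ totalInt T) ∩ stepInt r) * Real.exp (-(dist q.1 r.1)))).sum
          ≤ (R.steps.map (fun r => ilen ((B \ totalInt T) ∩ stepInt r))).sum := by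
        apply List.sum_le_sum
        intro r _
        exact mul_le_of_le_one_right (ilen_nonneg _)
          (Real.exp_le_one_iff.mpr (neg_nonpos.mpr dist_nonneg))
      have step2 : (R.steps.map (fun r => ilen ((B \ totalInt T) ∩ stepInt r))).sum
          = ilen ((B \ totalInt T) ∩ totalInt R) :=
        traj_sum R _ (mB.diff mT)
      have step3 : ilen ((B \ totalInt T) ∩ totalInt R) ≤ ilen (B \ totalInt T) :=
        ilen_mono Set.inter_subset_left (hfin _ ((Set.diff_subset).trans hBS))
      linarith
    -- bound the triple sums
    have hbound2 : (R.steps.map (fun r =>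
          (T.steps.map (fun p => ilen (B ∩ stepInt r ∩ stepInt p))).sum *
            Real.exp (-(dist q.1 r.1)))).sum
        + (R.steps.map (fun r =>
            (T.steps.map (fun p =>
              ilen (B ∩ stepInt r ∩ stepInt p) * Real.exp (-(dist r.1 p.1)))).sum)).sum
        ≤ (T.steps.map (fun p =>
            ilen (B ∩ stepInt p) * (1 + Real.exp (-(dist q.1 p.1))))).sum := by
      have e1 : (R.steps.map (fun r =>
            (T.steps.map (fun p => ilen (B ∩ stepInt r ∩ stepInt p))).sum *
              Real.exp (-(dist q.1 r.1)))).sum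
          + (R.steps.map (fun r =>
              (T.steps.map (fun p =>
                ilen (B ∩ stepInt r ∩ stepInt p) * Real.exp (-(dist r.1 p.1)))).sum)).sum
          = (R.steps.map (fun r =>
              (T.steps.map (fun p =>
                ilen (B ∩ stepInt r ∩ stepInt p) *
                  (Real.exp (-(dist q.1 r.1)) + Real.exp (-(dist r.1 p.1))))).sum)).sum := by
        rw [← List.sum_map_add]
        apply congrArg List.sum
        apply List.map_congr_left
        intro r _
        rw [← List.sum_map_mul_right, ← List.sum_map_add]
        apply congrArg List.sum
        apply List.map_congr_left
        intro p _
        ring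
      have e2 : (R.steps.map (fun r =>
            (T.steps.map (fun p =>
              ilen (B ∩ stepInt r ∩ stepInt p) *
                (Real.exp (-(dist q.1 r.1)) + Real.exp (-(dist r.1 p.1))))).sum)).sum
          ≤ (R.steps.map (fun r =>
              (T.steps.map (fun p =>
                ilen (B ∩ stepInt r ∩ stepInt p) *
                  (1 + Real.exp (-(dist q.1 p.1))))).sum)).sum := by
        apply List.sum_le_sum
        intro r _
        apply List.sum_le_sum
        intro p _
        exact mul_le_mul_of_nonneg_left (exp_tri q.1 r.1 p.1) (ilen_nonneg _)
      have e3 : (R.steps.map (fun r =>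
            (T.steps.map (fun p =>
              ilen (B ∩ stepInt r ∩ stepInt p) *
                (1 + Real.exp (-(dist q.1 p.1))))).sum)).sum
          = (T.steps.map (fun p =>
              ilen ((B ∩ stepInt p) ∩ totalInt R) * (1 + Real.exp (-(dist q.1 p.1))))).sum := by
        rw [sum_swap' R.steps T.steps _]
        apply congrArg List.sum
        apply List.map_congr_left
        intro p _
        rw [← traj_sum R (B ∩ stepInt p) (mB.inter (mStep p)), ← List.sum_map_mul_right]
        apply congrArg List.sum
        apply List.map_congr_left
        intro r _
        congr 2
        ext t
        simp only [Set.mem_inter_iff]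
        tauto
      have e4 : (T.steps.map (fun p =>
            ilen ((B ∩ stepInt p) ∩ totalInt R) * (1 + Real.exp (-(dist q.1 p.1))))).sum
          ≤ (T.steps.map (fun p =>
              ilen (B ∩ stepInt p) * (1 + Real.exp (-(dist q.1 p.1))))).sum := by
        apply List.sum_le_sum
        intro p _
        apply mul_le_mul_of_nonneg_right
        · exact ilen_mono Set.inter_subset_left (hfin _ ((Set.inter_subset_left).trans hBS))
        · positivity
      linarith
    rw [hAexp, hDq]
    linarith
  -- combine everything
  rw [hQ1, hQ2, hG2]
  have merge1 : (Q.steps.map (fun q =>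
        (R.steps.map (fun r =>
          ilen (S ∩ stepInt q ∩ stepInt r) * Real.exp (-(dist q.1 r.1)))).sum
        + (R.steps.map (fun r =>
            (T.steps.map (fun p =>
              ilen (S ∩ stepInt q ∩ stepInt r ∩ stepInt p) *
                Real.exp (-(dist r.1 p.1)))).sum)).sum
        + ilen ((S ∩ totalInt T) ∩ stepInt q))).sum
      ≤ (Q.steps.map (fun q =>
          ilen (S ∩ stepInt q)
          + (T.steps.map (fun p =>
              ilen (S ∩ stepInt q ∩ stepInt p) *
                (1 + Real.exp (-(dist q.1 p.1))))).sum)).sum :=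
    List.sum_le_sum key
  rw [List.sum_map_add, List.sum_map_add] at merge1
  rw [List.sum_map_add] at merge1
  linarith
end
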